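/- Let H be a Hamiltonian on n qubits with 0 ≤ H ≤ t·I, and define the channel Φ(ρ) = Tr((H/t ⊗ I)ρ)·μ_Q + Tr(((I − H/t) ⊗ I)ρ)·|⊥⟩⟨⊥| on L(Q^{⊗(n+1)}) with outputs in L(Q_⊥). If there exists |ψ⟩ with ⟨ψ|H|ψ⟩ ≤ α, then the orthogonal states ρ = |ψ⟩⟨ψ|⊗|0⟩⟨0| and σ = |ψ⟩⟨ψ|⊗|1⟩⟨1| satisfy Tr(Φ(ρ)Φ(σ)) ≥ 1 − 2α/t. Conversely, if ⟨ψ|H|ψ⟩ ≥ β for all unit |ψ⟩, then Tr(Φ(τ)²) ≤ 1 − β/(2t) for every density operator τ, and hence Tr(Φ(ρ)Φ(σ)) ≤ 1 − β/(2t) for every pair of density operators ρ, σ. -/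

import Mathlib

open Matrix BigOperators ComplexOrder Kronecker

/-- A density operator: positive semidefinite with trace 1. -/
def IsDensity {ι : Type*} [Fintype ι] (ρ : Matrix ι ι ℂ) : Prop :=
  ρ.PosSemidef ∧ ρ.trace = 1

/-- The outer product `|ψ⟩⟨ψ|`. -/
noncomputable def outer {ι : Type*} [Fintype ι] (ψ : ι → ℂ) : Matrix ι ι ℂ :=
  Matrix.vecMulVec ψ (star ψ)

/-- The channel `Φ(ρ) = Tr((H/t ⊗ I)ρ)·μ_Q + Tr(((I − H/t) ⊗ I)ρ)·|⊥⟩⟨⊥|` built from a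
Hamiltonian `H`, as an operator on `L(Q^{⊗n} ⊗ Q)` with values in `L(Q_⊥)`, where
`Q_⊥ = ℂ³` has basis `|0⟩, |1⟩, |⊥⟩` and `μ_Q = I/2` on the span of `|0⟩, |1⟩`. -/
noncomputable def PhiH {N : ℕ} (t : ℝ) (Hm : Matrix (Fin N) (Fin N) ℂ)
    (ρ : Matrix (Fin N × Fin 2) (Fin N × Fin 2) ℂ) : Matrix (Fin 3) (Fin 3) ℂ :=
  Matrix.diagonal
    ![((Hm ⊗ₖ (1 : Matrix (Fin 2) (Fin 2) ℂ)) * ρ).trace / ((2 * t : ℝ) : ℂ),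
      ((Hm ⊗ₖ (1 : Matrix (Fin 2) (Fin 2) ℂ)) * ρ).trace / ((2 * t : ℝ) : ℂ),
      1 - ((Hm ⊗ₖ (1 : Matrix (Fin 2) (Fin 2) ℂ)) * ρ).trace / ((t : ℝ) : ℂ)]
/-! `Φ(ρ)` is diagonal and depends on `ρ` only through `h(ρ) = Tr((H ⊗ I) ρ)`: with
`x = h(ρ)/t` and `y = h(σ)/t` one has `Tr(Φ(ρ)Φ(σ)) = xy/2 + (1 - x)(1 - y)`. For the two product
states built from `ψ`, `x = y = ⟨ψ|H|ψ⟩/t`, and `x²/2 + (1 - x)² ≥ 1 - 2x`. Conversely the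
hypotheses say `β·I ≤ H ≤ t·I` in the Loewner order, and `A ↦ Tr((A ⊗ I) τ)` is monotone for
a density operator `τ`, so `x, y ∈ [0, 1]` with `y ≥ β/t`, where the bilinear expression is at
most `1 - β/(2t)`. -/

open scoped MatrixOrder

namespace Matrix

variable {𝕜 m n : Type*} [RCLike 𝕜] [Fintype m] [Fintype n]

lemma kronecker_le_kronecker_of_nonneg_right {A B : Matrix m m 𝕜} {C : Matrix n n 𝕜}
    (hAB : A ≤ B) (hC : 0 ≤ C) : A ⊗ₖ C ≤ B ⊗ₖ C := by
  have hsub : B ⊗ₖ C - A ⊗ₖ C = (B - A) ⊗ₖ C := by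
    rw [sub_eq_iff_eq_add, ← add_kronecker, sub_add_cancel]
  rw [le_iff, hsub]
  exact hAB.kronecker hC.posSemidef

lemma trace_mul_nonneg {A B : Matrix n n 𝕜} (hA : 0 ≤ A) (hB : 0 ≤ B) :
    0 ≤ (A * B).trace := by
  classical
  obtain ⟨C, rfl⟩ := CStarAlgebra.nonneg_iff_eq_star_mul_self.mp hB
  rw [← Matrix.mul_assoc, trace_mul_comm, ← Matrix.mul_assoc]
  exact (hA.posSemidef.mul_mul_conjTranspose_same C).trace_nonneg

lemma trace_mul_le_trace_mul_of_nonneg_right {A B τ : Matrix n n 𝕜} (hAB : A ≤ B)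
    (hτ : 0 ≤ τ) : (A * τ).trace ≤ (B * τ).trace := by
  rw [← sub_nonneg, ← trace_sub, ← Matrix.sub_mul]
  exact trace_mul_nonneg (sub_nonneg.mpr hAB) hτ

lemma star_ofReal_smul_dotProduct_mulVec (A : Matrix n n ℂ) (c : ℝ) (x : n → ℂ) :
    star ((c : ℂ) • x) ⬝ᵥ A *ᵥ ((c : ℂ) • x) = ((c ^ 2 : ℝ) : ℂ) * (star x ⬝ᵥ A *ᵥ x) := by
  rw [star_smul, mulVec_smul, dotProduct_smul, smul_dotProduct, Complex.star_def,
    Complex.conj_ofReal, smul_eq_mul, smul_eq_mul]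
  push_cast
  ring

lemma smul_one_le_of_forall_le_re_dotProduct [DecidableEq n] {A : Matrix n n ℂ}
    (hA : A.IsHermitian) {β : ℝ} (h : ∀ ψ : n → ℂ, star ψ ⬝ᵥ ψ = 1 → β ≤ (star ψ ⬝ᵥ A *ᵥ ψ).re) :
    (β : ℂ) • 1 ≤ A := by
  refine PosSemidef.of_dotProduct_mulVec_nonneg
    (hA.sub (isHermitian_one.smul (Complex.conj_ofReal β))) fun x => ?_
  rw [sub_mulVec, smul_mulVec, one_mulVec, dotProduct_sub, dotProduct_smul, sub_nonneg,
    smul_eq_mul]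
  rcases eq_or_ne x 0 with rfl | hx
  · simp
  obtain ⟨hr, hs_im⟩ := Complex.lt_def.mp (dotProduct_star_self_pos_iff.mpr hx)
  set r := (star x ⬝ᵥ x).re
  have hs : star x ⬝ᵥ x = r := Complex.ext rfl hs_im.symm
  replace hr : 0 < r := hr
  have hc : ((Real.sqrt r)⁻¹) ^ 2 = r⁻¹ := by rw [inv_pow, Real.sq_sqrt hr.le]
  -- apply `h` to the unit vector `x / √⟨x|x⟩`
  have hunit := star_ofReal_smul_dotProduct_mulVec 1 (Real.sqrt r)⁻¹ x
  rw [one_mulVec, one_mulVec, hs, hc] at hunit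
  have hβ := h _ <| hunit.trans <| by
    rw [← Complex.ofReal_mul, inv_mul_cancel₀ hr.ne', Complex.ofReal_one]
  rw [star_ofReal_smul_dotProduct_mulVec, hc, Complex.re_ofReal_mul, inv_mul_eq_div,
    le_div_iff₀ hr] at hβ
  rw [hs, Complex.le_def]
  refine ⟨by simpa using hβ, ?_⟩
  simpa using (hA.im_star_dotProduct_mulVec_self x).symm

end Matrix

lemma trace_mul_outer {n : Type*} [Fintype n] (A : Matrix n n ℂ) (ψ : n → ℂ) :
    (A * outer ψ).trace = star ψ ⬝ᵥ A *ᵥ ψ := by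
  rw [outer, mul_vecMulVec, trace_vecMulVec, dotProduct_comm]

section Energy

variable {m n : Type*} [Fintype m] [Fintype n] [DecidableEq n]

noncomputable def energy (Hm : Matrix m m ℂ) (ρ : Matrix (m × n) (m × n) ℂ) : ℂ :=
  ((Hm ⊗ₖ (1 : Matrix n n ℂ)) * ρ).trace

lemma energy_kronecker (Hm ρ : Matrix m m ℂ) (σ : Matrix n n ℂ) :
    energy Hm (ρ ⊗ₖ σ) = (Hm * ρ).trace * σ.trace := by
  rw [energy, ← mul_kronecker_mul, Matrix.one_mul, trace_kronecker]

lemma energy_smul_one [DecidableEq m] (c : ℂ) (ρ : Matrix (m × n) (m × n) ℂ) :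
    energy (c • 1 : Matrix m m ℂ) ρ = c * ρ.trace := by
  rw [energy, smul_kronecker, one_kronecker_one, Matrix.smul_mul, Matrix.one_mul, trace_smul,
    smul_eq_mul]

lemma energy_mono {A B : Matrix m m ℂ} {ρ : Matrix (m × n) (m × n) ℂ} (hAB : A ≤ B)
    (hρ : 0 ≤ ρ) : energy A ρ ≤ energy B ρ :=
  trace_mul_le_trace_mul_of_nonneg_right
    (kronecker_le_kronecker_of_nonneg_right hAB PosSemidef.one.nonneg) hρ

lemma le_energy [DecidableEq m] {Hm : Matrix m m ℂ} {ρ : Matrix (m × n) (m × n) ℂ} {c : ℂ}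
    (hc : c • 1 ≤ Hm) (hρ : IsDensity ρ) : c ≤ energy Hm ρ := by
  simpa [energy_smul_one, hρ.2] using energy_mono hc hρ.1.nonneg

lemma energy_le [DecidableEq m] {Hm : Matrix m m ℂ} {ρ : Matrix (m × n) (m × n) ℂ} {c : ℂ}
    (hc : Hm ≤ c • 1) (hρ : IsDensity ρ) : energy Hm ρ ≤ c := by
  simpa [energy_smul_one, hρ.2] using energy_mono hc hρ.1.nonneg

lemma re_energy_mem_Icc [DecidableEq m] {Hm : Matrix m m ℂ} {ρ : Matrix (m × n) (m × n) ℂ}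
    {a b : ℝ} (ha : (a : ℂ) • 1 ≤ Hm) (hb : Hm ≤ (b : ℂ) • 1) (hρ : IsDensity ρ) :
    energy Hm ρ = (energy Hm ρ).re ∧ (energy Hm ρ).re ∈ Set.Icc a b := by
  have hlo := le_energy ha hρ
  have hhi := energy_le hb hρ
  have hre := Complex.eq_re_of_ofReal_le hlo
  rw [hre] at hlo hhi
  exact ⟨hre, Complex.real_le_real.mp hlo, Complex.real_le_real.mp hhi⟩

lemma energy_outer_kronecker_outer (Hm : Matrix m m ℂ) (ψ : m → ℂ) {e : n → ℂ}
    (he : star e ⬝ᵥ e = 1) :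
    energy Hm (outer ψ ⊗ₖ outer e) = star ψ ⬝ᵥ Hm *ᵥ ψ := by
  rw [energy_kronecker, trace_mul_outer, outer, trace_vecMulVec, dotProduct_comm e, he, mul_one]

end Energy

lemma PhiH_eq_diagonal {N : ℕ} (t : ℝ) (Hm : Matrix (Fin N) (Fin N) ℂ)
    (ρ : Matrix (Fin N × Fin 2) (Fin N × Fin 2) ℂ) :
    PhiH t Hm ρ = diagonal ![energy Hm ρ / ((2 * t : ℝ) : ℂ), energy Hm ρ / ((2 * t : ℝ) : ℂ),
      1 - energy Hm ρ / (t : ℂ)] :=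
  rfl

lemma re_trace_PhiH_mul_PhiH {N : ℕ} {t a b : ℝ} {Hm : Matrix (Fin N) (Fin N) ℂ}
    {ρ σ : Matrix (Fin N × Fin 2) (Fin N × Fin 2) ℂ} (hρ : energy Hm ρ = a)
    (hσ : energy Hm σ = b) :
    (PhiH t Hm ρ * PhiH t Hm σ).trace.re = a / t * (b / t) / 2 + (1 - a / t) * (1 - b / t) := by
  simp only [PhiH_eq_diagonal, hρ, hσ, diagonal_mul_diagonal, trace_diagonal, Fin.sum_univ_three,
    cons_val_zero, cons_val_one, cons_val_two, head_cons, tail_cons]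
  norm_cast
  ring

lemma one_sub_two_mul_le_of_le {x a : ℝ} (h : x ≤ a) :
    1 - 2 * a ≤ x * x / 2 + (1 - x) * (1 - x) := by
  nlinarith [sq_nonneg x]

lemma mul_div_two_add_one_sub_mul_one_sub_le {c x y : ℝ} (hx : x ∈ Set.Icc 0 1)
    (hy : y ∈ Set.Icc 0 1) (hcy : c ≤ y) :
    x * y / 2 + (1 - x) * (1 - y) ≤ 1 - c / 2 := by
  obtain ⟨hx0, hx1⟩ := hx
  obtain ⟨hy0, hy1⟩ := hy
  nlinarith [mul_nonneg (sub_nonneg.2 hx1) (sub_nonneg.2 hy1),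
    mul_nonneg (sub_nonneg.2 hcy) (sub_nonneg.2 hx1), mul_nonneg hx0 hy0]

section Reduction

variable {N : ℕ} {t : ℝ} {Hm : Matrix (Fin N) (Fin N) ℂ}

lemma one_sub_two_mul_div_le_re_trace_PhiH_mul_PhiH (ht : 0 < t) (hH : Hm.PosSemidef) {α : ℝ}
    {ψ : Fin N → ℂ} {e₁ e₂ : Fin 2 → ℂ} (he₁ : star e₁ ⬝ᵥ e₁ = 1) (he₂ : star e₂ ⬝ᵥ e₂ = 1)
    (hα : (star ψ ⬝ᵥ Hm *ᵥ ψ).re ≤ α) :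
    1 - 2 * α / t ≤
      (PhiH t Hm (outer ψ ⊗ₖ outer e₁) * PhiH t Hm (outer ψ ⊗ₖ outer e₂)).trace.re := by
  have hq : star ψ ⬝ᵥ Hm *ᵥ ψ = (star ψ ⬝ᵥ Hm *ᵥ ψ).re :=
    Complex.eq_re_of_ofReal_le (by rw [Complex.ofReal_zero]; exact hH.dotProduct_mulVec_nonneg ψ)
  rw [re_trace_PhiH_mul_PhiH ((energy_outer_kronecker_outer Hm ψ he₁).trans hq)
    ((energy_outer_kronecker_outer Hm ψ he₂).trans hq), mul_div_assoc]
  exact one_sub_two_mul_le_of_le (div_le_div_of_nonneg_right hα ht.le)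

lemma re_trace_PhiH_mul_PhiH_le (ht : 0 < t) (hH : Hm.PosSemidef) (hHt : Hm ≤ (t : ℂ) • 1) {β : ℝ}
    (hβ : (β : ℂ) • 1 ≤ Hm) {ρ σ : Matrix (Fin N × Fin 2) (Fin N × Fin 2) ℂ}
    (hρ : IsDensity ρ) (hσ : IsDensity σ) :
    (PhiH t Hm ρ * PhiH t Hm σ).trace.re ≤ 1 - β / (2 * t) := by
  have h0 : ((0 : ℝ) : ℂ) • (1 : Matrix (Fin N) (Fin N) ℂ) ≤ Hm := by simpa using hH.nonneg
  obtain ⟨hρ_re, hρ0, hρt⟩ := re_energy_mem_Icc h0 hHt hρ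
  obtain ⟨hσ_re, hσ0, hσt⟩ := re_energy_mem_Icc h0 hHt hσ
  have hσβ := (re_energy_mem_Icc hβ hHt hσ).2.1
  rw [re_trace_PhiH_mul_PhiH hρ_re hσ_re, div_mul_eq_div_div_swap]
  exact mul_div_two_add_one_sub_mul_one_sub_le
    ⟨div_nonneg hρ0 ht.le, div_le_one_of_le₀ hρt ht.le⟩
    ⟨div_nonneg hσ0 ht.le, div_le_one_of_le₀ hσt ht.le⟩ (div_le_div_of_nonneg_right hσβ ht.le)

end Reduction

/-- Reduction from the local Hamiltonian problem to the clique problem: for `0 ≤ H ≤ t·I`,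
if `⟨ψ|H|ψ⟩ ≤ α` then the orthogonal states `|ψ⟩⟨ψ|⊗|0⟩⟨0|` and `|ψ⟩⟨ψ|⊗|1⟩⟨1|` satisfy
`Tr(Φ(ρ)Φ(σ)) ≥ 1 − 2α/t`; conversely, if `⟨ψ|H|ψ⟩ ≥ β` for all unit `|ψ⟩`, then
`Tr(Φ(τ)²) ≤ 1 − β/(2t)` for every density `τ`, and hence `Tr(Φ(ρ)Φ(σ)) ≤ 1 − β/(2t)` for
every pair of densities `ρ, σ`. -/
theorem hamiltonian_to_clique {N : ℕ} (t α β : ℝ) (ht : 0 < t)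
    (Hm : Matrix (Fin N) (Fin N) ℂ) (hH : Hm.PosSemidef)
    (hHt : ((t : ℂ) • (1 : Matrix (Fin N) (Fin N) ℂ) - Hm).PosSemidef) :
    (∀ ψ : Fin N → ℂ, star ψ ⬝ᵥ ψ = 1 → (star ψ ⬝ᵥ Hm *ᵥ ψ).re ≤ α →
      1 - 2 * α / t ≤
        ((PhiH t Hm (outer ψ ⊗ₖ outer (![1, 0] : Fin 2 → ℂ)) *
          PhiH t Hm (outer ψ ⊗ₖ outer (![0, 1] : Fin 2 → ℂ))).trace).re)
    ∧ ((∀ ψ : Fin N → ℂ, star ψ ⬝ᵥ ψ = 1 → β ≤ (star ψ ⬝ᵥ Hm *ᵥ ψ).re) →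
        (∀ τ : Matrix (Fin N × Fin 2) (Fin N × Fin 2) ℂ, IsDensity τ →
          ((PhiH t Hm τ * PhiH t Hm τ).trace).re ≤ 1 - β / (2 * t)) ∧
        (∀ ρ σ : Matrix (Fin N × Fin 2) (Fin N × Fin 2) ℂ, IsDensity ρ → IsDensity σ →
          ((PhiH t Hm ρ * PhiH t Hm σ).trace).re ≤ 1 - β / (2 * t))) := by
  refine ⟨fun ψ _ hα => ?_, fun hβ => ?_⟩
  · exact one_sub_two_mul_div_le_re_trace_PhiH_mul_PhiH ht hH
      (by simp [dotProduct]) (by simp [dotProduct]) hα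
  · have hβH := smul_one_le_of_forall_le_re_dotProduct hH.isHermitian hβ
    have bound := fun ρ σ (hρ : IsDensity ρ) (hσ : IsDensity σ) =>
      re_trace_PhiH_mul_PhiH_le ht hH hHt hβH hρ hσ
    exact ⟨fun τ hτ => bound τ τ hτ hτ, bound⟩
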